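/- arXiv:1911.09256 — 2 statements merged into one kernel-verified Lean document; each statement's English description precedes it below -/
import Mathlib

section
/- Let v₁ be uniform on [α−1, α] and v₂ be uniform on [β−1, β], independent, with α, β ∈ [0,1]. For a price p with α − β < p ≤ α, the probability that v₁ − p ≥ max(v₂, 0) equals (1−β)(α−p) + (α−p)²/2. -/
open MeasureTheory Set

/-- Two-product uniform WtP: if `v₁ ~ U[α-1,α]`, `v₂ ~ U[β-1,β]` independent, and
`α - β < p ≤ α`, then `P(v₁ - p ≥ max(v₂,0)) = (1-β)(α-p) + (α-p)²/2`. -/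
theorem stmt_3 (α β p : ℝ) (hα : α ∈ Icc (0:ℝ) 1) (hβ : β ∈ Icc (0:ℝ) 1)
    (hp1 : α - β < p) (hp2 : p ≤ α) :
    (((volume.restrict (Icc (α - 1) α)).prod (volume.restrict (Icc (β - 1) β)))
      {q : ℝ × ℝ | q.1 - p ≥ max q.2 0}).toReal
      = (1 - β) * (α - p) + (α - p) ^ 2 / 2 := by
  obtain ⟨hα0, hα1⟩ := hα
  obtain ⟨hβ0, hβ1⟩ := hβ
  have hs : MeasurableSet {q : ℝ × ℝ | q.1 - p ≥ max q.2 0} :=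
    measurableSet_le (measurable_snd.max measurable_const)
      (measurable_fst.sub measurable_const)
  rw [Measure.prod_apply hs]
  have key : ∀ x ∈ Icc (α-1) α,
      (volume.restrict (Icc (β-1) β)) (Prod.mk x ⁻¹' {q : ℝ × ℝ | q.1 - p ≥ max q.2 0})
        = (Ici p).indicator (fun x => ENNReal.ofReal (x - p + 1 - β)) x := by
    intro x hx
    by_cases hxp : p ≤ x
    · have hset : (Prod.mk x ⁻¹' {q : ℝ × ℝ | q.1 - p ≥ max q.2 0}) = Iic (x - p) := by
        ext y
        simp only [mem_preimage, mem_setOf_eq, mem_Iic, ge_iff_le, max_le_iff]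
        exact ⟨fun h => h.1, fun h => ⟨h, by linarith⟩⟩
      rw [hset, indicator_of_mem (show x ∈ Ici p from hxp), Measure.restrict_apply measurableSet_Iic]
      have hint : Iic (x - p) ∩ Icc (β-1) β = Icc (β-1) (x-p) := by
        ext y
        simp only [mem_inter_iff, mem_Iic, mem_Icc]
        constructor
        · rintro ⟨h1, h2, _⟩; exact ⟨h2, h1⟩
        · rintro ⟨h1, h2⟩; exact ⟨h2, h1, by linarith [hx.2]⟩
      rw [hint, Real.volume_Icc]
      congr 1; ring
    · rw [indicator_of_notMem (show x ∉ Ici p from hxp)]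
      have hempty : (Prod.mk x ⁻¹' {q : ℝ × ℝ | q.1 - p ≥ max q.2 0}) = ∅ := by
        ext y
        simp only [mem_preimage, mem_setOf_eq, ge_iff_le, max_le_iff,
          mem_empty_iff_false, iff_false, not_and]
        intro h
        linarith
      rw [hempty, measure_empty]
  rw [setLIntegral_congr_fun measurableSet_Icc key]
  rw [lintegral_indicator measurableSet_Ici _, Measure.restrict_restrict measurableSet_Ici]
  have hIcc : Ici p ∩ Icc (α-1) α = Icc p α := by
    ext x
    simp only [mem_inter_iff, mem_Ici, mem_Icc]
    constructor
    · rintro ⟨h1, _, h3⟩; exact ⟨h1, h3⟩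
    · rintro ⟨h1, h2⟩; exact ⟨h1, by linarith, h2⟩
  rw [hIcc]
  have hInt : IntegrableOn (fun x : ℝ => x - p + 1 - β) (Icc p α) volume := by
    apply Continuous.integrableOn_Icc; continuity
  have hnn : 0 ≤ᵐ[volume.restrict (Icc p α)] fun x : ℝ => x - p + 1 - β := by
    refine (ae_restrict_iff' measurableSet_Icc).2 (Filter.Eventually.of_forall ?_)
    intro x hx
    have := hx.1
    simp only [Pi.zero_apply]
    linarith
  rw [← ofReal_integral_eq_lintegral_ofReal hInt hnn]
  have hval : ∫ x in Icc p α, (x - p + 1 - β) = (1 - β) * (α - p) + (α - p) ^ 2 / 2 := by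
    rw [integral_Icc_eq_integral_Ioc, ← intervalIntegral.integral_of_le hp2]
    have h1 : ∫ x in p..α, (x - p + 1 - β) = ∫ x in p..α, (x + (1 - β - p)) := by
      congr 1; ext x; ring
    rw [h1, intervalIntegral.integral_add intervalIntegral.intervalIntegrable_id
      (intervalIntegrable_const (c := 1 - β - p))]
    open intervalIntegral in rw [integral_id, intervalIntegral.integral_const, smul_eq_mul]
    ring
  rw [hval, ENNReal.toReal_ofReal]
  nlinarith
end

section
/- Let α, β ∈ [0,1] with α > 2β(1 − β/4), let 0 ≤ φ̄ ≤ 1, and define p(φ̄) = (1/4)(2α − β²(1−φ̄) − √(φ̄)·√(4α² − β⁴(1−φ̄))). Then p(φ̄) satisfies the indifference equation p(α − p) − (1−φ̄)·p·β²/2 = (1−φ̄)·((2α−β²)/4)², i.e., the seller's expected revenue from pricing at p(φ̄) with guaranteed promotion equals the revenue (1−φ̄)·p*·ρ_c(p*) from selling only to patient consumers at p* = (2α−β²)/4. -/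
/-- Myopic promotion price in the uniform WtP model: `p(φ̄)` solves the seller's
indifference equation between pricing at `p(φ̄)` with guaranteed promotion and the
outside option of selling only to patient consumers at `p* = (2α-β²)/4`. -/
theorem stmt_9 (α β φ : ℝ) (hα : α ∈ Set.Icc (0:ℝ) 1) (hβ : β ∈ Set.Icc (0:ℝ) 1)
    (hαβ : α > 2 * β * (1 - β / 4)) (hφ : φ ∈ Set.Icc (0:ℝ) 1) :
    let p := (1/4) * (2 * α - β ^ 2 * (1 - φ)
      - Real.sqrt φ * Real.sqrt (4 * α ^ 2 - β ^ 4 * (1 - φ)))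
    p * (α - p) - (1 - φ) * p * (β ^ 2 / 2) = (1 - φ) * ((2 * α - β ^ 2) / 4) ^ 2 := by
  obtain ⟨hα0, hα1⟩ := hα
  obtain ⟨hβ0, hβ1⟩ := hβ
  obtain ⟨hφ0, hφ1⟩ := hφ
  have hαβ2 : 2 * α ≥ β ^ 2 := by nlinarith
  have h4 : 4 * α ^ 2 - β ^ 4 ≥ 0 := by nlinarith [mul_nonneg (sub_nonneg.2 hαβ2) (by positivity : (0:ℝ) ≤ 2 * α + β ^ 2)]
  have harg : 4 * α ^ 2 - β ^ 4 * (1 - φ) ≥ 0 := by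
    nlinarith [mul_nonneg (pow_nonneg hβ0 4) hφ0]
  have h1 : Real.sqrt φ ^ 2 = φ := Real.sq_sqrt hφ0
  have h2 : Real.sqrt (4 * α ^ 2 - β ^ 4 * (1 - φ)) ^ 2
      = 4 * α ^ 2 - β ^ 4 * (1 - φ) := Real.sq_sqrt harg
  have hs : (Real.sqrt φ * Real.sqrt (4 * α ^ 2 - β ^ 4 * (1 - φ))) ^ 2
      = φ * (4 * α ^ 2 - β ^ 4 * (1 - φ)) := by
    rw [mul_pow, h1, h2]
  intro p
  show (1/4) * (2 * α - β ^ 2 * (1 - φ)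
        - Real.sqrt φ * Real.sqrt (4 * α ^ 2 - β ^ 4 * (1 - φ)))
      * (α - (1/4) * (2 * α - β ^ 2 * (1 - φ)
        - Real.sqrt φ * Real.sqrt (4 * α ^ 2 - β ^ 4 * (1 - φ))))
      - (1 - φ) * ((1/4) * (2 * α - β ^ 2 * (1 - φ)
        - Real.sqrt φ * Real.sqrt (4 * α ^ 2 - β ^ 4 * (1 - φ)))) * (β ^ 2 / 2)
      = (1 - φ) * ((2 * α - β ^ 2) / 4) ^ 2
  linear_combination (-(1:ℝ)/16) * hs
end
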